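/- arXiv:2004.02500 — 2 statements merged into one kernel-verified Lean document; each statement's English description precedes it below -/
import Mathlib

section
/- Define w(n) = ∑_{m ≥ 1} μ(m)·φ₁(mn)·φ₂(mn)·ϑ(m²n²)/m². Then w(n) admits the Euler-product evaluation w(n) = ∏_{p ∤ n}(1 - ϑ(p²)/(p(p+2))) · ∏_{p^k ∥ n}(ϑ(p^{2k}) - ϑ(p^{2k+2})/p²)·(1 + 2/p)^{-1}. -/
/-!
Let `ψ(k) = φ₁(k) φ₂(k) ϑ(k²)` (`phiTheta`), a multiplicative function, and for `p^k ∥ n` let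
`a_p = ψ(p^{k+1}) / (p² ψ(p^k))` (`localCoeff`). For squarefree `m`,
`ψ(mn) = ψ(n) ∏_{p ∣ m} p² a_p`, so the `m`-th term of `w(n)` is `ψ(n) μ(m) ∏_{p ∣ m} a_p`.
The Euler product of this multiplicative function of `m` is `∏_p (1 - a_p)`. It converges
absolutely: for `p ∤ nΔ`, Hensel's lemma gives `ϑ(p²) = ϑ(p) ≤ 3`, so `a_p ≤ 3/p²`.
Splitting off the finitely many primes dividing `n` gives the formula.
-/

open Finset ArithmeticFunction

/-- The number of roots of `F(x) = x³ + Ax + B` modulo `n`. -/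
noncomputable def theta (A B : ℤ) (n : ℕ) : ℕ :=
  Nat.card {ρ : ZMod n // ρ ^ 3 + (A : ZMod n) * ρ + (B : ZMod n) = 0}

/-- `φ₁(m) = ∏_{p | m} (1 + 1/p)⁻¹`. -/
noncomputable def phi1 (m : ℕ) : ℝ :=
  ∏ p ∈ m.primeFactors, (1 + (p : ℝ)⁻¹)⁻¹

/-- `φ₂(m) = ∏_{p | m} (1 + 1/(p+1))⁻¹`. -/
noncomputable def phi2 (m : ℕ) : ℝ :=
  ∏ p ∈ m.primeFactors, (1 + ((p : ℝ) + 1)⁻¹)⁻¹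

open Polynomial
open scoped ArithmeticFunction.Moebius

lemma Polynomial.aeval_ringHom_apply {R S : Type*} [CommRing R] [CommRing S] (f : R →+* S)
    (x : R) (P : ℤ[X]) : aeval (f x) P = f (aeval x P) :=
  aeval_algHom_apply f.toIntAlgHom x P

lemma Nat.multiplicative_factorization_of_subset {β : Type*} [CommMonoid β] (f : ℕ → β)
    (h_mult : ∀ a b : ℕ, a.Coprime b → f (a * b) = f a * f b) (hf : f 1 = 1) {k : ℕ} (hk : k ≠ 0)
    {U : Finset ℕ} (hU : k.primeFactors ⊆ U) : f k = ∏ p ∈ U, f (p ^ k.factorization p) := by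
  rw [Nat.multiplicative_factorization f h_mult hf hk,
    Finsupp.prod_of_support_subset _ (by simpa using hU) _ fun _ _ => by rw [pow_zero, hf]]

lemma Nat.Primes.hasProd_ite_dvd {α : Type*} [CommMonoid α] [TopologicalSpace α] (f : ℕ → α)
    {n : ℕ} (hn : n ≠ 0) :
    HasProd (fun p : Nat.Primes => if (p : ℕ) ∣ n then f p else 1) (∏ p ∈ n.primeFactors, f p) := by
  classical
  have h : HasProd (fun p : Nat.Primes => if (p : ℕ) ∣ n then f p else 1)
      (∏ p ∈ n.primeFactors.subtype Nat.Prime, if (p : ℕ) ∣ n then f p else 1) :=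
    hasProd_prod_of_ne_finset_one fun p hp =>
      if_neg fun hdvd => hp (mem_subtype.mpr (Nat.mem_primeFactors.mpr ⟨p.2, hdvd, hn⟩))
  rwa [prod_subtype_of_mem (fun p => if p ∣ n then f p else 1)
      fun _ => Nat.prime_of_mem_primeFactors,
    prod_congr rfl fun p hp => if_pos (Nat.dvd_of_mem_primeFactors hp)] at h

section RootCount

noncomputable def rootCount (P : ℤ[X]) (k : ℕ) : ℕ := Nat.card {x : ZMod k // aeval x P = 0}

variable (P : ℤ[X])

lemma rootCount_one : rootCount P 1 = 1 := by
  rw [rootCount, Nat.card_eq_one_iff_unique]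
  exact ⟨inferInstance, ⟨⟨0, Subsingleton.elim _ _⟩⟩⟩

lemma rootCount_mul {a b : ℕ} (h : a.Coprime b) :
    rootCount P (a * b) = rootCount P a * rootCount P b := by
  rw [rootCount, rootCount, rootCount, ← Nat.card_prod]
  let e := ZMod.chineseRemainder h
  refine Nat.card_congr ((e.toEquiv.subtypeEquiv fun x => ?_).trans Equiv.subtypeProdEquivProd)
  have h₁ : aeval (e x).1 P = (e (aeval x P)).1 :=
    aeval_ringHom_apply ((RingHom.fst _ _).comp e.toRingHom) x P
  have h₂ : aeval (e x).2 P = (e (aeval x P)).2 :=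
    aeval_ringHom_apply ((RingHom.snd _ _).comp e.toRingHom) x P
  change _ ↔ aeval (e x).1 P = 0 ∧ aeval (e x).2 P = 0
  rw [← map_eq_zero_iff e e.injective, Prod.ext_iff, h₁, h₂]
  rfl

lemma rootCount_eq_zero_of_dvd {d k : ℕ} (h : rootCount P d = 0) (hdk : d ∣ k) (hk : k ≠ 0) :
    rootCount P k = 0 := by
  have : NeZero d := ⟨ne_zero_of_dvd_ne_zero hk hdk⟩
  rw [rootCount, Nat.card_eq_zero] at h ⊢
  refine .inl ⟨fun x => (h.resolve_right (not_infinite_iff_finite.mpr inferInstance)).false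
    ⟨ZMod.castHom hdk _ x.1, ?_⟩⟩
  rw [aeval_ringHom_apply, x.2, _root_.map_zero]

end RootCount

section RootsModPrimeSq

lemma aeval_add_natCast_mul_zmod_sq {p : ℕ} (P : ℤ[X]) (x z : ZMod (p ^ 2)) :
    aeval (x + (p : ZMod (p ^ 2)) * z) P
      = aeval x P + aeval x (derivative P) * ((p : ZMod (p ^ 2)) * z) := by
  obtain ⟨k, hk⟩ := binomExpansion (P.map (algebraMap ℤ (ZMod (p ^ 2)))) x ((p : ZMod (p ^ 2)) * z)
  have hp : (p : ZMod (p ^ 2)) ^ 2 = 0 := by exact_mod_cast ZMod.natCast_self (p ^ 2)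
  simp only [eval_map_algebraMap, derivative_map] at hk
  rw [hk, mul_pow, hp, zero_mul, mul_zero, add_zero]

variable {p : ℕ} [Fact p.Prime]

local notation "π" => ZMod.castHom (dvd_pow_self p two_ne_zero) (ZMod p)

lemma ZMod.castHom_sq_apply (x : ZMod (p ^ 2)) : π x = (x.val : ZMod p) := by
  rw [ZMod.castHom_apply, ZMod.natCast_val]

lemma ZMod.exists_eq_mul_of_castHom_sq_eq_zero {x : ZMod (p ^ 2)} (hx : π x = 0) :
    ∃ z : ZMod (p ^ 2), x = (p : ZMod (p ^ 2)) * z := by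
  rw [ZMod.castHom_sq_apply, ZMod.natCast_eq_zero_iff] at hx
  obtain ⟨z, hz⟩ := hx
  exact ⟨z, by rw [← ZMod.natCast_zmod_val x, hz, Nat.cast_mul]⟩

lemma ZMod.isUnit_of_castHom_sq_ne_zero {u : ZMod (p ^ 2)} (hu : π u ≠ 0) : IsUnit u := by
  rw [ZMod.castHom_sq_apply, Ne, ZMod.natCast_eq_zero_iff] at hu
  rw [← ZMod.natCast_zmod_val u, ZMod.isUnit_iff_coprime]
  exact (((Fact.out : p.Prime).coprime_iff_not_dvd).mpr hu).symm.pow_right 2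

theorem rootCount_prime_sq {P : ℤ[X]}
    (hP : ∀ r : ZMod p, aeval r P = 0 → aeval r (derivative P) ≠ 0) :
    rootCount P (p ^ 2) = rootCount P p := by
  have hπ_root {x : ZMod (p ^ 2)} (hx : aeval x P = 0) : aeval (π x) P = 0 := by
    rw [aeval_ringHom_apply, hx, _root_.map_zero]
  have hunit {x : ZMod (p ^ 2)} (hx : aeval (π x) P = 0) : IsUnit (aeval x (derivative P)) :=
    ZMod.isUnit_of_castHom_sq_ne_zero (by rw [← aeval_ringHom_apply]; exact hP _ hx)
  refine Nat.card_eq_of_bijective (fun x => ⟨π x, hπ_root x.2⟩) ⟨?_, ?_⟩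
  · rintro ⟨x, hx⟩ ⟨y, hy⟩ hxy
    obtain ⟨z, hz⟩ := ZMod.exists_eq_mul_of_castHom_sq_eq_zero (x := y - x)
      (by rw [map_sub, sub_eq_zero]; exact congrArg Subtype.val hxy.symm)
    have hTaylor := aeval_add_natCast_mul_zmod_sq P x z
    rw [← hz, add_sub_cancel, hx, hy, zero_add] at hTaylor
    rw [Subtype.mk.injEq, eq_comm, ← sub_eq_zero]
    exact ((hunit (hπ_root hx)).mul_right_eq_zero).mp hTaylor.symm
  · rintro ⟨r, hr⟩
    obtain ⟨x₀, rfl⟩ := ZMod.castHom_surjective (dvd_pow_self p two_ne_zero) r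
    obtain ⟨s, hs⟩ := ZMod.exists_eq_mul_of_castHom_sq_eq_zero (x := aeval x₀ P)
      (by rw [← aeval_ringHom_apply]; exact hr)
    obtain ⟨u, hu⟩ := hunit hr
    -- the Newton step `x₀ - P(x₀) / P'(x₀)`
    refine ⟨⟨x₀ + (p : ZMod (p ^ 2)) * (-s * ↑u⁻¹), ?_⟩, ?_⟩
    · rw [aeval_add_natCast_mul_zmod_sq, hs, ← hu]
      linear_combination -((p : ZMod (p ^ 2)) * s) * u.mul_inv
    · simp

end RootsModPrimeSq

theorem Polynomial.card_aeval_eq_zero_le_natDegree {K : Type*} [Field K] {P : ℤ[X]}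
    (hP : P.Monic) : Nat.card {x : K // aeval x P = 0} ≤ P.natDegree := by
  classical
  set Q := P.map (algebraMap ℤ K)
  have hQ : Q ≠ 0 := (hP.map _).ne_zero
  calc Nat.card {x : K // aeval x P = 0} = Q.roots.toFinset.card := by
        rw [← Nat.card_eq_finsetCard]
        exact Nat.card_congr (Equiv.subtypeEquivRight fun x => by
          rw [Multiset.mem_toFinset, mem_roots hQ, IsRoot.def, eval_map_algebraMap])
    _ ≤ Multiset.card Q.roots := Multiset.toFinset_card_le _
    _ ≤ Q.natDegree := card_roots' Q
    _ = P.natDegree := hP.natDegree_map _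

section Theta

variable (A B : ℤ)

noncomputable def depressedCubic : ℤ[X] := X ^ 3 + C A * X + C B

lemma monic_depressedCubic : (depressedCubic A B).Monic := by
  unfold depressedCubic; monicity!

lemma natDegree_depressedCubic : (depressedCubic A B).natDegree = 3 := by
  unfold depressedCubic; compute_degree!

lemma theta_eq_rootCount : theta A B = rootCount (depressedCubic A B) := by
  ext k
  simp [theta, rootCount, depressedCubic]

lemma theta_mul {a b : ℕ} (h : a.Coprime b) : theta A B (a * b) = theta A B a * theta A B b := by
  simp only [theta_eq_rootCount, rootCount_mul _ h]

lemma theta_prime_sq_le_three {p : ℕ} (hp : p.Prime) (hΔ : ¬ (p : ℤ) ∣ -(4 * A ^ 3 + 27 * B ^ 2)) :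
    theta A B (p ^ 2) ≤ 3 := by
  have : Fact p.Prime := ⟨hp⟩
  have h_simple (r : ZMod p) (hr : aeval r (depressedCubic A B) = 0) :
      aeval r (derivative (depressedCubic A B)) ≠ 0 := by
    intro hr'
    have hF : r ^ 3 + A * r + B = 0 := by simpa [depressedCubic] using hr
    have hF' : 3 * r ^ 2 + A = 0 := by simpa [depressedCubic, map_ofNat] using hr'
    apply hΔ
    rw [← ZMod.intCast_zmod_eq_zero_iff_dvd]
    push_cast
    -- a Bézout certificate: the discriminant lies in the ideal generated by `F` and `F'`
    linear_combination (18 * (A : ZMod p) * r - 27 * B) * hF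
      - (6 * (A : ZMod p) * r ^ 2 - 9 * B * r + 4 * A ^ 2) * hF'
  rw [theta_eq_rootCount, rootCount_prime_sq h_simple, rootCount, ← natDegree_depressedCubic A B]
  exact card_aeval_eq_zero_le_natDegree (monic_depressedCubic A B)

end Theta

section MoebiusProd

variable (a : ℕ → ℝ)

noncomputable def moebiusProd : ArithmeticFunction ℝ :=
  pmul (μ : ArithmeticFunction ℝ) (prodPrimeFactors a)

lemma moebiusProd_apply {m : ℕ} (hm : m ≠ 0) :
    moebiusProd a m = μ m * ∏ p ∈ m.primeFactors, a p := by
  simp [moebiusProd, hm]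

lemma isMultiplicative_moebiusProd : (moebiusProd a).IsMultiplicative :=
  isMultiplicative_moebius.intCast.pmul (.prodPrimeFactors a)

lemma tsum_moebiusProd_prime_pow {p : ℕ} (hp : p.Prime) :
    ∑' e, moebiusProd a (p ^ e) = 1 - a p := by
  rw [tsum_eq_sum (s := range 2) fun e he => ?_]
  · simp [sum_range_succ, moebiusProd_apply, hp.ne_zero, hp.primeFactors, moebius_apply_prime hp]
    ring
  · have he : 2 ≤ e := by simp at he; omega
    rw [moebiusProd_apply _ (pow_ne_zero _ hp.ne_zero), moebius_apply_prime_pow hp (by omega),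
      if_neg (by omega), Int.cast_zero, zero_mul]

lemma summable_norm_moebiusProd (ha : Summable fun p : Nat.Primes => a p) :
    Summable (‖moebiusProd a ·‖) := by
  classical
  -- compare with the sum of `∏ p ∈ s, |a p|` over the finite sets `s` of primes
  let σ : {m : ℕ // Squarefree m} → Finset Nat.Primes := fun m => m.1.primeFactors.subtype Nat.Prime
  have hσ : Function.Injective σ := by
    intro m₁ m₂ h
    have h' := congrArg (Finset.map (Function.Embedding.subtype Nat.Prime)) h
    simp only [σ, subtype_map_of_mem fun _ => Nat.prime_of_mem_primeFactors] at h'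
    rw [Subtype.ext_iff, ← Nat.prod_primeFactors_of_squarefree m₁.2,
      ← Nat.prod_primeFactors_of_squarefree m₂.2, h']
  have hnorm (m : {m : ℕ // Squarefree m}) : ‖moebiusProd a m‖ = ∏ p ∈ σ m, |a p| := by
    rw [moebiusProd_apply _ m.2.ne_zero, norm_mul, norm_prod]
    simp only [Real.norm_eq_abs, ← Int.cast_abs, abs_moebius_eq_one_of_squarefree m.2,
      Int.cast_one, one_mul]
    exact (prod_subtype_of_mem (fun p => |a p|) fun _ => Nat.prime_of_mem_primeFactors).symm
  have hsupp : Function.support (‖moebiusProd a ·‖) ⊆ {m | Squarefree m} := fun m hm => by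
    by_contra hsq
    simp [moebiusProd, moebius_eq_zero_of_not_squarefree hsq] at hm
  rw [← Set.indicator_eq_self.mpr hsupp, ← summable_subtype_iff_indicator]
  exact ((summable_finsetProd_of_summable_nonneg (fun _ => abs_nonneg _) ha.abs).comp_injective
    hσ).congr fun m => (hnorm m).symm

lemma hasProd_one_sub_tsum_moebiusProd (ha : Summable fun p : Nat.Primes => a p) :
    HasProd (fun p : Nat.Primes => 1 - a p) (∑' m, moebiusProd a m) := by
  have h := (isMultiplicative_moebiusProd a).eulerProduct_hasProd (summable_norm_moebiusProd a ha)
  exact (funext fun p : Nat.Primes => tsum_moebiusProd_prime_pow a p.2) ▸ h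

lemma tsum_moebiusProd_eq_tprod_mul_prod (ha : Summable fun p : Nat.Primes => a p) {n : ℕ}
    (hn : n ≠ 0) :
    ∑' m, moebiusProd a m
      = (∏' p : {p : Nat.Primes // ¬ (p : ℕ) ∣ n}, (1 - a p))
        * ∏ p ∈ n.primeFactors, (1 - a p) := by
  classical
  -- the product over the primes not dividing `n` converges, being itself an Euler product
  let a' : ℕ → ℝ := fun p => if p ∣ n then 0 else a p
  have ha' : Summable fun p : Nat.Primes => a' p :=
    ha.abs.of_norm_bounded fun p => by by_cases h : (p : ℕ) ∣ n <;> simp [a', h]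
  have h_coprime := hasProd_one_sub_tsum_moebiusProd a' ha'
  have h_subtype : HasProd (fun p : {p : Nat.Primes // ¬ (p : ℕ) ∣ n} => 1 - a p)
      (∑' m, moebiusProd a' m) := by
    refine (hasProd_subtype_iff_mulIndicator (s := {p : Nat.Primes | ¬ (p : ℕ) ∣ n})
      (f := fun p : Nat.Primes => 1 - a p)).mpr ?_
    convert h_coprime using 2 with p
    by_cases h : (p : ℕ) ∣ n <;> simp [a', h]
  have h_all := h_coprime.mul (Nat.Primes.hasProd_ite_dvd (α := ℝ) (fun p => 1 - a p) hn)
  have h_split : (fun p : Nat.Primes => (1 - a' p) * if (p : ℕ) ∣ n then 1 - a p else 1)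
      = fun p : Nat.Primes => 1 - a p :=
    funext fun p => by by_cases h : (p : ℕ) ∣ n <;> simp [a', h]
  rw [h_split] at h_all
  rw [h_subtype.tprod_eq]
  exact (hasProd_one_sub_tsum_moebiusProd a ha).unique h_all

end MoebiusProd

lemma phi1_mul_phi2 (k : ℕ) : phi1 k * phi2 k = ∏ p ∈ k.primeFactors, (p : ℝ) / (p + 2) := by
  rw [phi1, phi2, ← prod_mul_distrib]
  refine prod_congr rfl fun p hp => ?_
  have hp : (0 : ℝ) < p := by exact_mod_cast Nat.pos_of_mem_primeFactors hp
  field_simp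
  ring

section PhiTheta

variable (A B : ℤ)

noncomputable def phiTheta (k : ℕ) : ℝ := phi1 k * phi2 k * theta A B (k ^ 2)

lemma phiTheta_one : phiTheta A B 1 = 1 := by
  simp [phiTheta, phi1, phi2, theta_eq_rootCount, rootCount_one]

lemma phiTheta_mul {a b : ℕ} (h : a.Coprime b) :
    phiTheta A B (a * b) = phiTheta A B a * phiTheta A B b := by
  simp only [phiTheta, phi1_mul_phi2, h.primeFactors_mul, prod_union h.disjoint_primeFactors,
    mul_pow, theta_mul A B (h.pow 2 2), Nat.cast_mul]
  ring

lemma phiTheta_eq_prod {k : ℕ} (hk : k ≠ 0) {U : Finset ℕ} (hU : k.primeFactors ⊆ U) :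
    phiTheta A B k = ∏ p ∈ U, phiTheta A B (p ^ k.factorization p) :=
  Nat.multiplicative_factorization_of_subset _ (fun _ _ => phiTheta_mul A B) (phiTheta_one A B)
    hk hU

lemma phiTheta_prime_pow {p j : ℕ} (hp : p.Prime) (hj : j ≠ 0) :
    phiTheta A B (p ^ j) = p / (p + 2) * theta A B (p ^ (2 * j)) := by
  rw [phiTheta, phi1_mul_phi2, Nat.primeFactors_prime_pow hj hp, prod_singleton, ← pow_mul,
    mul_comm j]

lemma phiTheta_eq_zero_of_dvd {d k : ℕ} (h : phiTheta A B d = 0) (hdk : d ∣ k) (hk : k ≠ 0) :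
    phiTheta A B k = 0 := by
  have hphi (m : ℕ) : phi1 m * phi2 m ≠ 0 := by
    rw [phi1_mul_phi2]
    exact prod_ne_zero_iff.mpr fun p hp => by
      have : (0 : ℝ) < p := by exact_mod_cast Nat.pos_of_mem_primeFactors hp
      positivity
  rw [phiTheta, mul_eq_zero, Nat.cast_eq_zero, theta_eq_rootCount] at h ⊢
  exact .inr (rootCount_eq_zero_of_dvd _ (h.resolve_left (hphi d)) (pow_dvd_pow_of_dvd hdk 2)
    (pow_ne_zero 2 hk))

/-- The junk value `0` of the division when `ψ(p^k) = 0` is harmless, since then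
`ψ(p^(k+1)) = 0` as well (see `phiTheta_prime_pow_succ`). -/
noncomputable def localCoeff (n p : ℕ) : ℝ :=
  phiTheta A B (p ^ (n.factorization p + 1)) / phiTheta A B (p ^ n.factorization p) / p ^ 2

lemma phiTheta_prime_pow_succ {p : ℕ} (hp : p.Prime) (n : ℕ) :
    phiTheta A B (p ^ (n.factorization p + 1))
      = phiTheta A B (p ^ n.factorization p) * (p ^ 2 * localCoeff A B n p) := by
  have hp2 : (p : ℝ) ^ 2 ≠ 0 := by have := hp.pos; positivity
  rw [localCoeff, mul_div_cancel₀ _ hp2, mul_div_cancel_of_imp' fun h =>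
    phiTheta_eq_zero_of_dvd A B h (pow_dvd_pow p (Nat.le_succ _)) (pow_ne_zero _ hp.ne_zero)]

lemma localCoeff_of_not_dvd {n p : ℕ} (hp : p.Prime) (hpn : ¬ p ∣ n) :
    localCoeff A B n p = theta A B (p ^ 2) / (p * (p + 2)) := by
  have : (0 : ℝ) < p := by exact_mod_cast hp.pos
  rw [localCoeff, Nat.factorization_eq_zero_of_not_dvd hpn, pow_zero, phiTheta_one, zero_add,
    phiTheta_prime_pow A B hp one_ne_zero, Nat.mul_one]
  field_simp

lemma phiTheta_mul_of_squarefree {m n : ℕ} (hm : Squarefree m) (hn : n ≠ 0) :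
    phiTheta A B (m * n) = phiTheta A B n * ∏ p ∈ m.primeFactors, (p ^ 2 * localCoeff A B n p) := by
  classical
  have hmn := Nat.primeFactors_mul hm.ne_zero hn
  rw [phiTheta_eq_prod A B (mul_ne_zero hm.ne_zero hn) subset_rfl,
    phiTheta_eq_prod A B hn (hmn ▸ subset_union_right),
    ← inter_eq_right.mpr (hmn ▸ subset_union_left : m.primeFactors ⊆ (m * n).primeFactors),
    ← prod_ite_mem, ← prod_mul_distrib]
  refine prod_congr rfl fun p hp => ?_
  have hp' := Nat.prime_of_mem_primeFactors hp
  rw [Nat.factorization_mul hm.ne_zero hn, Finsupp.add_apply]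
  split_ifs with hpm
  · rw [Nat.factorization_eq_one_of_squarefree hm hp' (Nat.dvd_of_mem_primeFactors hpm), add_comm,
      phiTheta_prime_pow_succ A B hp']
  · rw [Finsupp.notMem_support_iff.mp (by rwa [Nat.support_factorization]), zero_add, mul_one]

end PhiTheta

section EulerProduct

variable (A B : ℤ)

lemma summand_eq_phiTheta_mul_moebiusProd {n : ℕ} (hn : n ≠ 0) (m : ℕ) :
    (μ m : ℝ) * phi1 (m * n) * phi2 (m * n) * (theta A B ((m * n) ^ 2) : ℝ) / (m : ℝ) ^ 2
      = phiTheta A B n * moebiusProd (localCoeff A B n) m := by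
  by_cases hm : Squarefree m
  · have hm2 : (m : ℝ) ^ 2 = ∏ p ∈ m.primeFactors, (p : ℝ) ^ 2 := by
      rw [prod_pow, ← Nat.cast_prod, Nat.prod_primeFactors_of_squarefree hm]
    have hm2_ne : ∏ p ∈ m.primeFactors, (p : ℝ) ^ 2 ≠ 0 :=
      hm2 ▸ pow_ne_zero 2 (Nat.cast_ne_zero.mpr hm.ne_zero)
    calc _ = (μ m : ℝ) * phiTheta A B (m * n) / (m : ℝ) ^ 2 := by rw [phiTheta]; ring
      _ = _ := by
        rw [phiTheta_mul_of_squarefree A B hm hn, moebiusProd_apply _ hm.ne_zero, prod_mul_distrib,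
          hm2]
        field_simp
  · simp [moebiusProd, moebius_eq_zero_of_not_squarefree hm]

lemma summable_localCoeff (hΔ : -(4 * A ^ 3 + 27 * B ^ 2) ≠ 0) {n : ℕ} (hn : n ≠ 0) :
    Summable fun p : Nat.Primes => localCoeff A B n p := by
  set N := n * (-(4 * A ^ 3 + 27 * B ^ 2)).natAbs
  have hN : N ≠ 0 := mul_ne_zero hn (Int.natAbs_ne_zero.mpr hΔ)
  have hsum : Summable fun p : Nat.Primes => 3 / (p : ℝ) ^ 2 := by
    have h := (Real.summable_one_div_nat_pow.mpr one_lt_two).comp_injective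
      (Subtype.val_injective : Function.Injective ((↑) : Nat.Primes → ℕ))
    exact (h.mul_left 3).congr fun p => mul_one_div _ _
  have hfin : {p : Nat.Primes | (p : ℕ) ∣ N}.Finite :=
    (N.primeFactors.finite_toSet.preimage Subtype.val_injective.injOn).subset
      fun p hp => Nat.mem_primeFactors.mpr ⟨p.2, hp, hN⟩
  refine hsum.of_norm_bounded_eventually ?_
  filter_upwards [hfin.compl_mem_cofinite] with p hpN
  have hpn : ¬ (p : ℕ) ∣ n := fun h => hpN (h.mul_right _)
  have hpΔ : ¬ ((p : ℕ) : ℤ) ∣ -(4 * A ^ 3 + 27 * B ^ 2) := fun h =>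
    hpN (dvd_mul_of_dvd_right (Int.natCast_dvd.mp h) _)
  have hpos : (0 : ℝ) < p := by exact_mod_cast p.2.pos
  have hθ : (theta A B ((p : ℕ) ^ 2) : ℝ) ≤ 3 := by
    exact_mod_cast theta_prime_sq_le_three A B p.2 hpΔ
  rw [localCoeff_of_not_dvd A B p.2 hpn, Real.norm_of_nonneg (by positivity)]
  calc _ ≤ 3 / ((p : ℝ) * (p + 2)) := by gcongr
    _ ≤ 3 / (p : ℝ) ^ 2 := div_le_div_of_nonneg_left (by norm_num) (by positivity) (by nlinarith)

lemma phiTheta_mul_prod_one_sub_localCoeff {n : ℕ} (hn : n ≠ 0) :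
    phiTheta A B n * ∏ p ∈ n.primeFactors, (1 - localCoeff A B n p)
      = ∏ p ∈ n.primeFactors,
          ((theta A B (p ^ (2 * n.factorization p)) : ℝ)
              - (theta A B (p ^ (2 * n.factorization p + 2)) : ℝ) / (p : ℝ) ^ 2)
            * (1 + 2 / (p : ℝ))⁻¹ := by
  rw [phiTheta_eq_prod A B hn subset_rfl, ← prod_mul_distrib]
  refine prod_congr rfl fun p hp => ?_
  have hp' := Nat.prime_of_mem_primeFactors hp
  have hpos : (0 : ℝ) < p := by exact_mod_cast hp'.pos
  have hk : n.factorization p ≠ 0 := Finsupp.mem_support_iff.mp (by rwa [Nat.support_factorization])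
  have hsucc := phiTheta_prime_pow_succ A B hp' n
  have hcoeff : phiTheta A B (p ^ n.factorization p) * localCoeff A B n p
      = phiTheta A B (p ^ (n.factorization p + 1)) / (p : ℝ) ^ 2 := by
    rw [hsucc]
    field_simp
  rw [mul_one_sub, hcoeff, phiTheta_prime_pow A B hp' (Nat.succ_ne_zero _),
    phiTheta_prime_pow A B hp' hk, Nat.mul_succ]
  field_simp

end EulerProduct

/-- Euler-product evaluation of
`w(n) = ∑_{m ≥ 1} μ(m)·φ₁(mn)·φ₂(mn)·ϑ(m²n²)/m²`:
`w(n) = ∏_{p ∤ n}(1 - ϑ(p²)/(p(p+2))) · ∏_{p^k ∥ n}(ϑ(p^{2k}) - ϑ(p^{2k+2})/p²)(1 + 2/p)⁻¹`. -/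
theorem w_euler_product (A B : ℤ) (hΔ : -(4 * A ^ 3 + 27 * B ^ 2) ≠ 0) (n : ℕ) (hn : 0 < n) :
    (∑' m : ℕ, ((moebius m : ℝ) * phi1 (m * n) * phi2 (m * n) * (theta A B ((m * n) ^ 2) : ℝ))
        / (m : ℝ) ^ 2)
      = (∏' p : {p : Nat.Primes // ¬ (p : ℕ) ∣ n},
          (1 - (theta A B ((p : ℕ) ^ 2) : ℝ) / ((p : ℕ) * ((p : ℕ) + 2))))
        * ∏ p ∈ n.primeFactors,
            ((theta A B (p ^ (2 * n.factorization p)) : ℝ)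
                - (theta A B (p ^ (2 * n.factorization p + 2)) : ℝ) / (p : ℝ) ^ 2)
              * (1 + 2 / (p : ℝ))⁻¹ := by
  have hn₀ := hn.ne'
  calc _ = ∑' m : ℕ, phiTheta A B n * moebiusProd (localCoeff A B n) m :=
        tsum_congr (summand_eq_phiTheta_mul_moebiusProd A B hn₀)
    _ = (∏' p : {p : Nat.Primes // ¬ (p : ℕ) ∣ n}, (1 - localCoeff A B n p))
          * (phiTheta A B n * ∏ p ∈ n.primeFactors, (1 - localCoeff A B n p)) := by
        rw [tsum_mul_left,
          tsum_moebiusProd_eq_tprod_mul_prod _ (summable_localCoeff A B hΔ hn₀) hn₀]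
        ring
    _ = _ := by
        rw [phiTheta_mul_prod_one_sub_localCoeff A B hn₀]
        congr 1
        exact tprod_congr fun p => by rw [localCoeff_of_not_dvd A B p.1.2 p.2]
end

section
/- Let d ≥ 1 be square-free and let P be a rational point on the twisted elliptic curve E_d : dy² = x³ + Ax + B that is not a 2-torsion point. Then there exists a unique 5-tuple (x, y, z, t, ℓ) ∈ ℤ × ℤ_{≠0} × ℤ_{≥1}³ satisfying z² | t, d = tℓ/z², gcd(xy, t) = 1, and ℓy² = x³ + Axt² + Bt³, such that P has homogeneous coordinates (xt : yz : t²). -/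
/-!
Write `x₀ = g x`, `z₀ = g t` with `g = gcd(x₀, z₀)`. Dividing the equation by `g` gives
`d y₀² t = g² F̃(x, t)`; as `g` is prime to `y₀`, `g² ∣ d t`, and since `d` is squarefree this
forces `g ∣ t`, say `t = g c`. Then `t F̃(x, t) = d (c y₀)²` with `F̃(x, t) ≡ x³ (mod t)` prime to `t`, and
splitting `c y₀ = y z` with `z = gcd(c y₀, t)` turns this into `d z² = t ℓ` and `F̃(x, t) = ℓ y²`.
Conversely `x / t` must be `x₀ / z₀` in lowest terms, `c` is then forced by `t² = c z₀`, and `z` is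
forced as the part of `y z = c y₀` that divides `t`.
-/

theorem eq_of_mul_eq_mul_of_isCoprime {a b a' b' : ℤ} (h : a * b = a' * b')
    (ha : IsCoprime a b') (ha' : IsCoprime a' b) (hb : 0 ≤ b) (hb' : 0 ≤ b') : b = b' :=
  Int.dvd_antisymm hb hb' (ha'.symm.dvd_of_dvd_mul_left ⟨a, by rw [← h, mul_comm]⟩)
    (ha.symm.dvd_of_dvd_mul_left ⟨a', by rw [h, mul_comm]⟩)

theorem isCoprime_of_dvd_of_gcd_gcd_eq_one {g x₀ y₀ z₀ : ℤ}
    (hprim : Int.gcd x₀ (Int.gcd y₀ z₀) = 1) (hx : g ∣ x₀) (hz : g ∣ z₀) : IsCoprime g y₀ := by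
  have hk : (Int.gcd g y₀ : ℤ) ∣ Int.gcd x₀ (Int.gcd y₀ z₀) :=
    Int.dvd_coe_gcd ((Int.gcd_dvd_left _ _).trans hx)
      (Int.dvd_coe_gcd (Int.gcd_dvd_right _ _) ((Int.gcd_dvd_left _ _).trans hz))
  rw [hprim, Nat.cast_one, Int.natCast_dvd_ofNat, Nat.dvd_one] at hk
  exact Int.isCoprime_iff_gcd_eq_one.mpr hk

theorem isCoprime_cubic_form {x t : ℤ} (A B : ℤ) (h : IsCoprime x t) :
    IsCoprime (x ^ 3 + A * x * t ^ 2 + B * t ^ 3) t := by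
  rw [show x ^ 3 + A * x * t ^ 2 + B * t ^ 3 = x ^ 3 + (A * x * t + B * t ^ 2) * t by ring]
  exact h.pow_left.add_mul_right_left _

theorem exists_eq_mul_sq_of_mul_eq_mul_sq {d t N m : ℤ} (ht : 0 < t) (hN : IsCoprime N t)
    (h : t * N = d * m ^ 2) :
    ∃ y z l : ℤ, y * z = m ∧ 0 < z ∧ z ^ 2 ∣ t ∧ d * z ^ 2 = t * l ∧ IsCoprime y t ∧
      l * y ^ 2 = N := by
  obtain ⟨z, y, s, hz, hgcd, rfl, rfl⟩ :=
    Int.exists_gcd_one' (Int.gcd_pos_of_ne_zero_right m ht.ne')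
  have hys : IsCoprime y s := Int.isCoprime_iff_gcd_eq_one.mpr hgcd
  have hs : s * N = d * z * y ^ 2 :=
    mul_right_cancel₀ (b := (z : ℤ)) (by positivity) (by linear_combination h)
  have hyN : y ^ 2 ∣ N := hys.pow_left.dvd_of_dvd_mul_left ⟨d * z, by rw [hs]; ring⟩
  have hyz : IsCoprime y z :=
    (hN.of_isCoprime_of_dvd_left ((dvd_pow_self y two_ne_zero).trans hyN))
      |>.of_isCoprime_of_dvd_right (dvd_mul_left _ _)
  have hzs : (z : ℤ) ∣ s :=
    (hN.symm.of_isCoprime_of_dvd_left (dvd_mul_left _ _)).dvd_of_dvd_mul_right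
      ⟨d * y ^ 2, by rw [hs]; ring⟩
  obtain ⟨l, hl⟩ : s ∣ d * z := hys.symm.pow_right.dvd_of_dvd_mul_right ⟨N, by rw [← hs]⟩
  have hs0 : s ≠ 0 := by rintro rfl; simp at ht
  exact ⟨y, z, l, rfl, by positivity, by rw [sq]; exact mul_dvd_mul_right hzs _,
    by linear_combination z * hl, hys.mul_right hyz,
    mul_left_cancel₀ hs0 (by linear_combination -y ^ 2 * hl - hs)⟩

theorem exists_reduced_of_primitive {A B d x₀ y₀ z₀ : ℤ} (hd : Squarefree d) (hz₀ : 0 < z₀)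
    (hprim : Int.gcd x₀ (Int.gcd y₀ z₀) = 1)
    (heq : d * y₀ ^ 2 * z₀ = x₀ ^ 3 + A * x₀ * z₀ ^ 2 + B * z₀ ^ 3) :
    ∃ x t c : ℤ, 0 < t ∧ 0 < c ∧ IsCoprime x t ∧ x * t = c * x₀ ∧ t ^ 2 = c * z₀ ∧
      t * (x ^ 3 + A * x * t ^ 2 + B * t ^ 3) = d * (c * y₀) ^ 2 := by
  obtain ⟨g, x, s, hg, hxs, rfl, rfl⟩ :=
    Int.exists_gcd_one' (Int.gcd_pos_of_ne_zero_right x₀ hz₀.ne')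
  have hgy : IsCoprime (g : ℤ) y₀ :=
    isCoprime_of_dvd_of_gcd_gcd_eq_one hprim (dvd_mul_left _ _) (dvd_mul_left _ _)
  have hs : d * y₀ ^ 2 * s = g ^ 2 * (x ^ 3 + A * x * s ^ 2 + B * s ^ 3) :=
    mul_right_cancel₀ (b := (g : ℤ)) (by positivity) (by linear_combination heq)
  have hgs : (g : ℤ) ∣ s := hd.dvd_of_squarefree_of_mul_dvd_mul_right <|
    (hgy.mul_left hgy).pow_right (n := 2) |>.dvd_of_dvd_mul_right
      ⟨x ^ 3 + A * x * s ^ 2 + B * s ^ 3, by linear_combination hs⟩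
  obtain ⟨c, rfl⟩ := hgs
  have hc : 0 < c := by nlinarith
  refine ⟨x, g * c, c, by positivity, hc, Int.isCoprime_iff_gcd_eq_one.mpr hxs, by ring, by ring,
    mul_left_cancel₀ (a := (g : ℤ)) (by positivity) (by linear_combination -c * hs)⟩

def IsTwistCoords (A B d x₀ y₀ z₀ x y z t l : ℤ) : Prop :=
  y ≠ 0 ∧ 1 ≤ z ∧ 1 ≤ t ∧ 1 ≤ l ∧ z ^ 2 ∣ t ∧ d * z ^ 2 = t * l ∧ Int.gcd (x * y) t = 1 ∧
    l * y ^ 2 = x ^ 3 + A * x * t ^ 2 + B * t ^ 3 ∧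
    ∃ c : ℤ, 0 < c ∧ x * t = c * x₀ ∧ y * z = c * y₀ ∧ t ^ 2 = c * z₀

theorem exists_isTwistCoords {A B d x₀ y₀ z₀ : ℤ} (hd : Squarefree d) (hd0 : 0 < d)
    (hy₀ : y₀ ≠ 0) (hz₀ : 0 < z₀) (hprim : Int.gcd x₀ (Int.gcd y₀ z₀) = 1)
    (heq : d * y₀ ^ 2 * z₀ = x₀ ^ 3 + A * x₀ * z₀ ^ 2 + B * z₀ ^ 3) :
    ∃ x y z t l, IsTwistCoords A B d x₀ y₀ z₀ x y z t l := by
  obtain ⟨x, t, c, ht, hc, hxt, hx, htz, htN⟩ := exists_reduced_of_primitive hd hz₀ hprim heq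
  obtain ⟨y, z, l, hyz, hz, hzt, hdl, hyt, hly⟩ :=
    exists_eq_mul_sq_of_mul_eq_mul_sq ht (isCoprime_cubic_form A B hxt) htN
  have hl : 0 < l := pos_of_mul_pos_right (hdl ▸ by positivity) ht.le
  refine ⟨x, y, z, t, l, ?_, hz, ht, hl, hzt, hdl,
    Int.isCoprime_iff_gcd_eq_one.mp (hxt.mul_left hyt), hly, c, hc, hx, hyz, htz⟩
  rintro rfl
  exact mul_ne_zero hc.ne' hy₀ (by rw [← hyz, zero_mul])

theorem IsTwistCoords.unique {A B d x₀ y₀ z₀ x y z t l x' y' z' t' l' : ℤ} (hz₀ : z₀ ≠ 0)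
    (h : IsTwistCoords A B d x₀ y₀ z₀ x y z t l)
    (h' : IsTwistCoords A B d x₀ y₀ z₀ x' y' z' t' l') :
    x = x' ∧ y = y' ∧ z = z' ∧ t = t' ∧ l = l' := by
  obtain ⟨-, hz, ht, -, hzt, hdl, hcop, -, c, hc, hx, hy, htz⟩ := h
  obtain ⟨-, hz', ht', -, hzt', hdl', hcop', -, c', hc', hx', hy', htz'⟩ := h'
  obtain ⟨hxt, hyt⟩ := IsCoprime.mul_left_iff.mp (Int.isCoprime_iff_gcd_eq_one.mpr hcop)
  obtain ⟨hxt', hyt'⟩ := IsCoprime.mul_left_iff.mp (Int.isCoprime_iff_gcd_eq_one.mpr hcop')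
  have hred : x * z₀ = x₀ * t :=
    mul_left_cancel₀ hc.ne' (by linear_combination t * hx - x * htz)
  have hred' : x' * z₀ = x₀ * t' :=
    mul_left_cancel₀ hc'.ne' (by linear_combination t' * hx' - x' * htz')
  have hcross : x * t' = x' * t :=
    mul_left_cancel₀ hz₀ (by linear_combination t' * hred - t * hred')
  obtain rfl : t' = t := eq_of_mul_eq_mul_of_isCoprime hcross hxt hxt' (by omega) (by omega)
  obtain rfl : x = x' := mul_right_cancel₀ (by omega) hcross
  obtain rfl : c = c' := mul_right_cancel₀ hz₀ (htz ▸ htz')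
  obtain rfl : z = z' := eq_of_mul_eq_mul_of_isCoprime (hy.trans hy'.symm)
    (hyt.of_isCoprime_of_dvd_right ((dvd_pow_self _ two_ne_zero).trans hzt'))
    (hyt'.of_isCoprime_of_dvd_right ((dvd_pow_self _ two_ne_zero).trans hzt)) (by omega) (by omega)
  obtain rfl : y = y' := mul_right_cancel₀ (by omega) (hy.trans hy'.symm)
  exact ⟨rfl, rfl, rfl, rfl, mul_left_cancel₀ (by omega) (hdl.symm.trans hdl')⟩

theorem twist_point_coordinates'_general (A B : ℤ)
    (d : ℕ) (hd : Squarefree d)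
    (x₀ y₀ z₀ : ℤ) (hy₀ : y₀ ≠ 0) (hz₀ : 1 ≤ z₀)
    (hprim : Int.gcd x₀ (Int.gcd y₀ z₀) = 1)
    (heq : (d : ℤ) * y₀ ^ 2 * z₀ = x₀ ^ 3 + A * x₀ * z₀ ^ 2 + B * z₀ ^ 3) :
    ∃! T : ℤ × ℤ × ℤ × ℤ × ℤ,
      T.2.1 ≠ 0 ∧ 1 ≤ T.2.2.1 ∧ 1 ≤ T.2.2.2.1 ∧ 1 ≤ T.2.2.2.2 ∧
      T.2.2.1 ^ 2 ∣ T.2.2.2.1 ∧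
      (d : ℤ) * T.2.2.1 ^ 2 = T.2.2.2.1 * T.2.2.2.2 ∧
      Int.gcd (T.1 * T.2.1) T.2.2.2.1 = 1 ∧
      T.2.2.2.2 * T.2.1 ^ 2
        = T.1 ^ 3 + A * T.1 * T.2.2.2.1 ^ 2 + B * T.2.2.2.1 ^ 3 ∧
      ∃ c : ℤ, 0 < c ∧ T.1 * T.2.2.2.1 = c * x₀ ∧ T.2.1 * T.2.2.1 = c * y₀ ∧
        T.2.2.2.1 ^ 2 = c * z₀ := by
  obtain ⟨x, y, z, t, l, h⟩ := exists_isTwistCoords (Int.squarefree_natCast.mpr hd)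
    (by exact_mod_cast hd.ne_zero.bot_lt) hy₀ hz₀ hprim heq
  refine ⟨(x, y, z, t, l), h, fun ⟨x', y', z', t', l'⟩ h' => ?_⟩
  obtain ⟨rfl, rfl, rfl, rfl, rfl⟩ := IsTwistCoords.unique (by omega) h' h
  rfl

/-- Coordinates of non-2-torsion rational points on the quadratic twist
`E_d : d y² z = x³ + A x z² + B z³`: every primitive solution `(x₀, y₀, z₀)` with `y₀ ≠ 0` and
`z₀ ≥ 1` is represented by a unique 5-tuple `(x, y, z, t, ℓ)` with `z² | t`, `d z² = t ℓ`,
`gcd(xy, t) = 1`, `ℓ y² = x³ + A x t² + B t³`, and `P = (xt : yz : t²)` projectively. -/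
theorem twist_point_coordinates' (A B : ℤ) (hΔ : -(4 * A ^ 3 + 27 * B ^ 2) ≠ 0)
    (d : ℕ) (hd : Squarefree d) (hd1 : 1 ≤ d)
    (x₀ y₀ z₀ : ℤ) (hy₀ : y₀ ≠ 0) (hz₀ : 1 ≤ z₀)
    (hprim : Int.gcd x₀ (Int.gcd y₀ z₀) = 1)
    (heq : (d : ℤ) * y₀ ^ 2 * z₀ = x₀ ^ 3 + A * x₀ * z₀ ^ 2 + B * z₀ ^ 3) :
    ∃! T : ℤ × ℤ × ℤ × ℤ × ℤ,
      T.2.1 ≠ 0 ∧ 1 ≤ T.2.2.1 ∧ 1 ≤ T.2.2.2.1 ∧ 1 ≤ T.2.2.2.2 ∧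
      T.2.2.1 ^ 2 ∣ T.2.2.2.1 ∧
      (d : ℤ) * T.2.2.1 ^ 2 = T.2.2.2.1 * T.2.2.2.2 ∧
      Int.gcd (T.1 * T.2.1) T.2.2.2.1 = 1 ∧
      T.2.2.2.2 * T.2.1 ^ 2
        = T.1 ^ 3 + A * T.1 * T.2.2.2.1 ^ 2 + B * T.2.2.2.1 ^ 3 ∧
      ∃ c : ℤ, 0 < c ∧ T.1 * T.2.2.2.1 = c * x₀ ∧ T.2.1 * T.2.2.1 = c * y₀ ∧
        T.2.2.2.1 ^ 2 = c * z₀ :=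
  twist_point_coordinates'_general A B d hd x₀ y₀ z₀ hy₀ hz₀ hprim heq
end
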